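/- Let E be a complex Banach space, A ∈ B(E), and ε₀ > 0. Assume that for every s ∈ ℝ the operator (ε₀ + is)I - A is invertible in B(E), and that the family {((ε₀ + is)I - A)^{-1} : s ∈ ℝ} is R-bounded with bound at most 1/(2ε₀). Then for every ε with 0 < ε < ε₀ and every s ∈ ℝ, the operator (-ε + is)I - A is invertible, with ((-ε + is)I - A)^{-1} = Σ_{n≥0} (ε₀ + ε)ⁿ (((ε₀ + is)I - A)^{-1})^{n+1} (the series converging in operator norm), and the family {((-ε + is)I - A)^{-1} : s ∈ ℝ} is R-bounded with bound at most 1/(ε₀ - ε). -/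

import Mathlib

/-! With `R = ((ε₀ + is)I - A)⁻¹` and `c = ε₀ + ε` one has
`(-ε + is)I - A = ((ε₀ + is)I - A)(I - cR)`.
R-boundedness applied to a single operator gives `‖R‖ ≤ 1/(2ε₀)`, so `‖cR‖ < 1` and the Neumann
series `∑ cⁿ Rⁿ⁺¹` inverts `(-ε + is)I - A`.

For the R-bound, `∑_ε ‖∑ₙ εₙ yₙ‖²` is the squared norm of the vector of signed sums in
`L²({±1}ᴺ; E)`. R-boundedness with bound `K` says that applying `(R(sₙ))ₙ` coordinatewise
multiplies this norm by at most `K`, hence `(R(sₙ)ᵏ)ₙ` by at most `Kᵏ`; summing the series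
gives the bound `K / (1 - cK) = 1/(ε₀ - ε)` for `K = 1/(2ε₀)`. -/

noncomputable section

/-- A family `𝒯` of bounded operators from `F` to `E` is `R`-bounded with bound `K`:
for all `N ≥ 1`, `T₁,…,T_N ∈ 𝒯` and `y₁,…,y_N ∈ F`,
`2^{-N} ∑_{ε ∈ {-1,1}^N} ‖∑ₙ εₙ Tₙ yₙ‖² ≤ K² 2^{-N} ∑_{ε ∈ {-1,1}^N} ‖∑ₙ εₙ yₙ‖²`
(signs `ε : Fin N → Bool`, with `true ↦ 1` and `false ↦ -1`). -/
def RBounded {F E : Type*} [NormedAddCommGroup F] [NormedSpace ℂ F]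
    [NormedAddCommGroup E] [NormedSpace ℂ E]
    (𝒯 : Set (F →L[ℂ] E)) (K : ℝ) : Prop :=
  ∀ (N : ℕ) (T : Fin N → (F →L[ℂ] E)), (∀ n, T n ∈ 𝒯) → ∀ y : Fin N → F,
    ((2 : ℝ) ^ N)⁻¹ *
        ∑ ε : Fin N → Bool,
          ‖∑ n : Fin N, (if ε n then (1 : ℝ) else -1) • T n (y n)‖ ^ 2
      ≤ K ^ 2 * (((2 : ℝ) ^ N)⁻¹ *
          ∑ ε : Fin N → Bool,
            ‖∑ n : Fin N, (if ε n then (1 : ℝ) else -1) • y n‖ ^ 2)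

open ContinuousLinearMap

section Neumann

theorem smul_pow_succ_eq_smul_pow_mul {M A : Type*} [Monoid M] [Monoid A] [MulAction M A]
    [IsScalarTower M A A] [SMulCommClass M A A] (a : M) (x : A) (n : ℕ) :
    a ^ n • x ^ (n + 1) = (a • x) ^ n * x := by
  rw [smul_pow, pow_succ, smul_mul_assoc]

variable {𝕜 A : Type*} [NormedField 𝕜] [NormedRing A] [NormedAlgebra 𝕜 A]
  [HasSummableGeomSeries A] {a : 𝕜} {x b : A}

theorem summable_smul_pow_succ (h : ‖a • x‖ < 1) :
    Summable fun n : ℕ => a ^ n • x ^ (n + 1) := by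
  simpa only [smul_pow_succ_eq_smul_pow_mul] using
    (summable_geometric_of_norm_lt_one h).mul_right x

theorem tsum_smul_pow_succ (h : ‖a • x‖ < 1) :
    ∑' n : ℕ, a ^ n • x ^ (n + 1) = (∑' n : ℕ, (a • x) ^ n) * x := by
  simp only [smul_pow_succ_eq_smul_pow_mul]
  exact (summable_geometric_of_norm_lt_one h).tsum_mul_right x

theorem sub_smul_one_mul_tsum_smul_pow_succ (hbx : b * x = 1) (h : ‖a • x‖ < 1) :
    (b - a • 1) * ∑' n : ℕ, a ^ n • x ^ (n + 1) = 1 := by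
  have hfactor : b - a • 1 = b * (1 - a • x) := by
    rw [mul_sub, mul_one, mul_smul_comm, hbx]
  rw [tsum_smul_pow_succ h, hfactor, mul_assoc, ← mul_assoc (1 - a • x),
    mul_neg_geom_series _ h, one_mul, hbx]

theorem tsum_smul_pow_succ_mul_sub_smul_one (hxb : x * b = 1) (h : ‖a • x‖ < 1) :
    (∑' n : ℕ, a ^ n • x ^ (n + 1)) * (b - a • 1) = 1 := by
  have hfactor : x * (b - a • 1) = 1 - a • x := by
    rw [mul_sub, hxb, mul_smul_comm, mul_one]
  rw [tsum_smul_pow_succ h, mul_assoc, hfactor, geom_series_mul_neg _ h]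

end Neumann

section Rademacher

variable {E : Type*} [NormedAddCommGroup E] [NormedSpace ℝ E]

def rademacherSum (N : ℕ) : (Fin N → E) →L[ℝ] PiLp 2 (fun _ : Fin N → Bool => E) :=
  (PiLp.continuousLinearEquiv 2 ℝ _).symm.toContinuousLinearMap ∘L
    ContinuousLinearMap.pi fun ε => ∑ n, (if ε n then (1 : ℝ) else -1) • proj n

theorem rademacherSum_apply {N : ℕ} (y : Fin N → E) (ε : Fin N → Bool) :
    rademacherSum N y ε = ∑ n, (if ε n then (1 : ℝ) else -1) • y n := by
  simp only [rademacherSum, coe_comp, ContinuousLinearEquiv.coe_coe, Function.comp_apply,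
    PiLp.continuousLinearEquiv_symm_apply, pi_apply, sum_apply, smul_apply, proj_apply]

theorem norm_rademacherSum_sq {N : ℕ} (y : Fin N → E) :
    ‖rademacherSum N y‖ ^ 2
      = ∑ ε : Fin N → Bool, ‖∑ n, (if ε n then (1 : ℝ) else -1) • y n‖ ^ 2 := by
  simp only [PiLp.norm_sq_eq_of_L2, rademacherSum_apply]

theorem norm_rademacherSum_const_sq (x : E) :
    ‖rademacherSum 1 (fun _ => x)‖ ^ 2 = 2 * ‖x‖ ^ 2 := by
  simp [norm_rademacherSum_sq, apply_ite]

end Rademacher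

section RBounded

variable {F E : Type*} [NormedAddCommGroup F] [NormedSpace ℂ F] [NormedAddCommGroup E]
  [NormedSpace ℂ E] {𝒯 : Set (F →L[ℂ] E)} {K : ℝ}

theorem rBounded_iff_norm_rademacherSum_le (hK : 0 ≤ K) :
    RBounded 𝒯 K ↔ ∀ (N : ℕ) (T : Fin N → (F →L[ℂ] E)), (∀ n, T n ∈ 𝒯) → ∀ y : Fin N → F,
      ‖rademacherSum N (fun n => T n (y n))‖ ≤ K * ‖rademacherSum N y‖ := by
  refine forall₄_congr fun N T _ y => ?_
  rw [← norm_rademacherSum_sq, ← norm_rademacherSum_sq, mul_left_comm,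
    mul_le_mul_iff_right₀ (by positivity), ← mul_pow,
    pow_le_pow_iff_left₀ (norm_nonneg _) (by positivity) two_ne_zero]

theorem RBounded.norm_le (h𝒯 : RBounded 𝒯 K) (hK : 0 ≤ K) {T : F →L[ℂ] E} (hT : T ∈ 𝒯) :
    ‖T‖ ≤ K := by
  refine opNorm_le_bound T hK fun x => ?_
  have hx := (rBounded_iff_norm_rademacherSum_le hK).1 h𝒯 1 (fun _ => T) (fun _ => hT)
    (fun _ => x)
  rw [← pow_le_pow_iff_left₀ (norm_nonneg _) (by positivity) two_ne_zero, mul_pow,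
    norm_rademacherSum_const_sq, norm_rademacherSum_const_sq] at hx
  rw [← pow_le_pow_iff_left₀ (norm_nonneg _) (by positivity) two_ne_zero, mul_pow]
  linarith

end RBounded

section RBoundedEndomorphisms

variable {E : Type*} [NormedAddCommGroup E] [NormedSpace ℂ E] {K : ℝ}

theorem RBounded.norm_rademacherSum_pow_le {𝒯 : Set (E →L[ℂ] E)} (h𝒯 : RBounded 𝒯 K)
    (hK : 0 ≤ K) {N : ℕ} {T : Fin N → (E →L[ℂ] E)} (hT : ∀ n, T n ∈ 𝒯) (k : ℕ) (y : Fin N → E) :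
    ‖rademacherSum N (fun n => (T n ^ k) (y n))‖ ≤ K ^ k * ‖rademacherSum N y‖ := by
  induction k with
  | zero => simp
  | succ k ih =>
    calc ‖rademacherSum N (fun n => (T n ^ (k + 1)) (y n))‖
        = ‖rademacherSum N (fun n => T n ((T n ^ k) (y n)))‖ := by simp only [pow_succ']; rfl
      _ ≤ K * ‖rademacherSum N (fun n => (T n ^ k) (y n))‖ :=
        (rBounded_iff_norm_rademacherSum_le hK).1 h𝒯 N T hT _
      _ ≤ K ^ (k + 1) * ‖rademacherSum N y‖ := by
        rw [pow_succ', mul_assoc]; gcongr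

theorem RBounded.tsum_smul_pow_succ [CompleteSpace E] {ι : Type*} {R : ι → (E →L[ℂ] E)}
    (hR : RBounded {T | ∃ i, T = R i} K) (hK : 0 ≤ K) {c : ℝ} (hc : 0 ≤ c) (hcK : c * K < 1) :
    RBounded {T | ∃ i, T = ∑' k : ℕ, c ^ k • R i ^ (k + 1)} (K / (1 - c * K)) := by
  rw [rBounded_iff_norm_rademacherSum_le (div_nonneg hK (by linarith))]
  intro N T hT y
  choose i hi using hT
  have hRi : ∀ n, R (i n) ∈ {T | ∃ i, T = R i} := fun n => ⟨i n, rfl⟩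
  have hnorm : ∀ n, ‖c • R (i n)‖ < 1 := fun n => calc
    ‖c • R (i n)‖ = c * ‖R (i n)‖ := by rw [norm_smul, Real.norm_of_nonneg hc]
    _ ≤ c * K := by gcongr; exact hR.norm_le hK (hRi n)
    _ < 1 := hcK
  have hsum : HasSum (fun k => rademacherSum N fun n => (c ^ k • R (i n) ^ (k + 1)) (y n))
      (rademacherSum N fun n => T n (y n)) := by
    refine (Pi.hasSum.2 fun n => ?_).mapL _
    rw [hi n]
    exact (summable_smul_pow_succ (hnorm n)).hasSum.mapL (apply ℂ E (y n))
  have hbound : ∀ k, ‖rademacherSum N fun n => (c ^ k • R (i n) ^ (k + 1)) (y n)‖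
      ≤ K * ‖rademacherSum N y‖ * (c * K) ^ k := fun k => calc
    _ = c ^ k * ‖rademacherSum N fun n => (R (i n) ^ (k + 1)) (y n)‖ := by
      have hsmul : (fun n => (c ^ k • R (i n) ^ (k + 1)) (y n))
          = c ^ k • fun n => (R (i n) ^ (k + 1)) (y n) := rfl
      rw [hsmul, map_smul, norm_smul, Real.norm_of_nonneg (by positivity)]
    _ ≤ c ^ k * (K ^ (k + 1) * ‖rademacherSum N y‖) := by
      gcongr; exact hR.norm_rademacherSum_pow_le hK hRi _ _
    _ = K * ‖rademacherSum N y‖ * (c * K) ^ k := by ring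
  calc _ ≤ K * ‖rademacherSum N y‖ * (1 - c * K)⁻¹ :=
        hsum.norm_le_of_bounded
          ((hasSum_geometric_of_lt_one (by positivity) hcK).mul_left _) hbound
    _ = K / (1 - c * K) * ‖rademacherSum N y‖ := by ring

end RBoundedEndomorphisms

/-- Let `A ∈ B(E)` and `ε₀ > 0`. Assume that for every `s ∈ ℝ` the operator
`(ε₀ + is)I - A` is invertible (with inverse `Rs s`), and that `{((ε₀+is)I - A)⁻¹ : s ∈ ℝ}` is
`R`-bounded with bound at most `1/(2ε₀)`. Then for every `0 < ε < ε₀` and every `s ∈ ℝ` the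
operator `(-ε + is)I - A` is invertible with inverse
`∑_{n≥0} (ε₀+ε)ⁿ (((ε₀+is)I - A)⁻¹)^{n+1}` (the series converging in operator norm), and the
family `{((-ε+is)I - A)⁻¹ : s ∈ ℝ}` is `R`-bounded with bound at most `1/(ε₀-ε)`. -/
theorem stochastic_datko_pazy_stmt17
    {E : Type*} [NormedAddCommGroup E] [NormedSpace ℂ E] [CompleteSpace E]
    (A : E →L[ℂ] E) (ε₀ : ℝ) (hε₀ : 0 < ε₀)
    (Rs : ℝ → (E →L[ℂ] E))
    (hinv : ∀ s : ℝ,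
      ((((ε₀ : ℂ) + s * Complex.I) • (1 : E →L[ℂ] E) - A) ∘L Rs s = 1 ∧
        Rs s ∘L (((ε₀ : ℂ) + s * Complex.I) • (1 : E →L[ℂ] E) - A) = 1))
    (hRb : RBounded {T : E →L[ℂ] E | ∃ s : ℝ, T = Rs s} (1 / (2 * ε₀))) :
    ∀ ε : ℝ, 0 < ε → ε < ε₀ →
      (∀ s : ℝ,
        Summable (fun n : ℕ => (ε₀ + ε) ^ n • (Rs s) ^ (n + 1)) ∧
        (((-ε : ℂ) + s * Complex.I) • (1 : E →L[ℂ] E) - A) ∘L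
            (∑' n : ℕ, (ε₀ + ε) ^ n • (Rs s) ^ (n + 1)) = 1 ∧
        (∑' n : ℕ, (ε₀ + ε) ^ n • (Rs s) ^ (n + 1)) ∘L
            (((-ε : ℂ) + s * Complex.I) • (1 : E →L[ℂ] E) - A) = 1) ∧
      RBounded {T : E →L[ℂ] E |
          ∃ s : ℝ, T = ∑' n : ℕ, (ε₀ + ε) ^ n • (Rs s) ^ (n + 1)}
        (1 / (ε₀ - ε)) := by
  intro ε hε hεε₀
  have hK : 0 ≤ 1 / (2 * ε₀) := by positivity
  have hcK : (ε₀ + ε) * (1 / (2 * ε₀)) < 1 := by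
    rw [mul_one_div, div_lt_one (by positivity)]
    linarith
  have hnorm : ∀ s, ‖(ε₀ + ε) • Rs s‖ < 1 := fun s => calc
    ‖(ε₀ + ε) • Rs s‖ = (ε₀ + ε) * ‖Rs s‖ := by
      rw [norm_smul, Real.norm_of_nonneg (by linarith)]
    _ ≤ (ε₀ + ε) * (1 / (2 * ε₀)) := by gcongr; exact hRb.norm_le hK ⟨s, rfl⟩
    _ < 1 := hcK
  have hshift : ∀ s : ℝ, ((-ε : ℂ) + s * Complex.I) • (1 : E →L[ℂ] E) - A
      = (((ε₀ : ℂ) + s * Complex.I) • 1 - A) - (ε₀ + ε) • 1 := fun s => by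
    rw [← Complex.coe_smul, sub_right_comm, ← sub_smul]
    congr 2
    push_cast
    ring
  refine ⟨fun s => ⟨summable_smul_pow_succ (hnorm s), ?_, ?_⟩, ?_⟩
  · rw [hshift]
    exact sub_smul_one_mul_tsum_smul_pow_succ (hinv s).1 (hnorm s)
  · rw [hshift]
    exact tsum_smul_pow_succ_mul_sub_smul_one (hinv s).2 (hnorm s)
  · convert hRb.tsum_smul_pow_succ hK (by linarith) hcK using 1
    field_simp
    ring

end
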